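/- Price characterization of enabledness (instance of Proposition 1): Let S = (P, Act, →) be a finite labeled transition system and p, q ∈ P. Then I(p) ⊆ I(q) if and only if no HML formula φ with expr(φ) ≤ (1,1,0,0,0,0) distinguishes p from q. -/

import Mathlib

/-! ### Energies and energy updates -/

/-- (Finite) energies: vectors in `ℕ^N`. -/
abbrev Energy (N : ℕ) := Fin N → ℕ

/-- Extended energies: vectors in `(ℕ ∪ {∞})^N`. -/
abbrev EnergyE (N : ℕ) := Fin N → ℕ∞

/-- Embedding of energies into extended energies. -/
def Energy.toE {N : ℕ} (e : Energy N) : EnergyE N := fun k => (e k : ℕ∞)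

/-- A component of an energy update: `-1`, `0`, or `min_D`. -/
inductive UpdComp (N : ℕ) : Type where
  | dec : UpdComp N
  | zero : UpdComp N
  | minOf (D : Finset (Fin N)) : UpdComp N
deriving DecidableEq

/-- An energy update: a vector of update components, where a `min_D`
component at index `k` must satisfy `k ∈ D`. -/
structure EnergyUpdate (N : ℕ) : Type where
  comp : Fin N → UpdComp N
  valid : ∀ k D, comp k = UpdComp.minOf D → k ∈ D

open Classical in
/-- Applying an energy update to an extended energy: component `k` becomes
`e k - 1`, `e k`, or `min_{d ∈ D} e d`; the result is undefined (`none`) if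
some component would become negative. -/
noncomputable def applyUpdE {N : ℕ} (e : EnergyE N) (u : EnergyUpdate N) :
    Option (EnergyE N) :=
  if ∀ k, u.comp k = UpdComp.dec → e k ≠ 0 then
    some (fun k =>
      match u.comp k with
      | UpdComp.dec => e k - 1
      | UpdComp.zero => e k
      | UpdComp.minOf D => (insert k D).inf' (Finset.insert_nonempty k D) e)
  else none

open Classical in
/-- Applying an energy update to a (finite) energy. -/
noncomputable def applyUpdN {N : ℕ} (e : Energy N) (u : EnergyUpdate N) :
    Option (Energy N) :=
  if ∀ k, u.comp k = UpdComp.dec → e k ≠ 0 then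
    some (fun k =>
      match u.comp k with
      | UpdComp.dec => e k - 1
      | UpdComp.zero => e k
      | UpdComp.minOf D => (insert k D).inf' (Finset.insert_nonempty k D) e)
  else none

/-! ### Declining energy games -/

/-- A declining `N`-dimensional energy game: positions (partitioned into defender
positions and attacker positions), moves, and a weight function assigning an
energy update to each move. -/
structure EnergyGame (N : ℕ) where
  Pos : Type
  defender : Pos → Prop
  move : Pos → Pos → Prop
  weight : Pos → Pos → EnergyUpdate N

/-- The attacker wins from position `g` with (extended) initial energy budget `e`:
inductive (attractor) characterization of the existence of an attacker winning
strategy.  (The attacker wins exactly the finite plays that get stuck at a defender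
position without the energy having become negative, so the attacker has a winning
strategy iff they can force the play into a stuck defender position in finitely
many steps while keeping all energy levels defined.) -/
inductive AttackerWins {N : ℕ} (G : EnergyGame N) : G.Pos → EnergyE N → Prop where
  | attack {g g' : G.Pos} {e e' : EnergyE N} :
      ¬ G.defender g → G.move g g' →
      applyUpdE e (G.weight g g') = some e' →
      AttackerWins G g' e' → AttackerWins G g e
  | defend {g : G.Pos} {e : EnergyE N} :
      G.defender g →
      (∀ g', G.move g g' → (applyUpdE e (G.weight g g')).isSome) →
      (∀ g' e', G.move g g' → applyUpdE e (G.weight g g') = some e' →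
        AttackerWins G g' e') →
      AttackerWins G g e
/-! ### The spectroscopy energy game -/

/-- Lifting of transition steps to sets of processes:
`stepSet step Q a = {q' | ∃ q ∈ Q, q →a q'}`. -/
def stepSet {P : Type} {Act : Type} (step : P → Act → P → Prop) (Q : Set P) (a : Act) :
    Set P := {q' | ∃ q ∈ Q, step q a q'}

/-- The actions enabled initially for a process `p`: `I(p)`. -/
def enabledActs {P : Type} {Act : Type} (step : P → Act → P → Prop) (p : P) : Set Act :=
  {a | ∃ p', step p a p'}

/-- Positions of the spectroscopy energy game: attacker positions `[p,Q]_a`,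
attacker clause positions `[p,q]_a^∧`, and defender positions `(p,Q,Q*)_d`. -/
inductive SpecPos (P : Type) : Type where
  | att (p : P) (Q : Set P)
  | attConj (p q : P)
  | defp (p : P) (Q Qs : Set P)

/-- Update `(-1,0,0,0,0,0)` of observation moves. -/
def uObs : EnergyUpdate 6 :=
  ⟨![.dec, .zero, .zero, .zero, .zero, .zero], by decide⟩

/-- Update `(0,-1,0,0,0,0)` of conjunction challenges. -/
def uConj : EnergyUpdate 6 :=
  ⟨![.zero, .dec, .zero, .zero, .zero, .zero], by decide⟩

/-- Update `(min_{1,3},0,0,0,0,0)` of conjunction revivals. -/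
def uRevival : EnergyUpdate 6 :=
  ⟨![.minOf {0, 2}, .zero, .zero, .zero, .zero, .zero], by decide⟩

/-- Update `(0,0,0,min_{3,4},0,0)` of conjunction answers. -/
def uAnswer : EnergyUpdate 6 :=
  ⟨![.zero, .zero, .zero, .minOf {2, 3}, .zero, .zero], by decide⟩

/-- Update `(min_{1,4},0,0,0,0,0)` of positive decisions. -/
def uPos : EnergyUpdate 6 :=
  ⟨![.minOf {0, 3}, .zero, .zero, .zero, .zero, .zero], by decide⟩

/-- Update `(min_{1,5},0,0,0,0,-1)` of negative decisions. -/
def uNeg : EnergyUpdate 6 :=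
  ⟨![.minOf {0, 4}, .zero, .zero, .zero, .zero, .dec], by decide⟩

/-- The moves of the spectroscopy energy game `G△`. -/
inductive SpecMove {P : Type} {Act : Type} (step : P → Act → P → Prop) :
    SpecPos P → SpecPos P → Prop where
  | obs {p p' : P} {Q : Set P} {a : Act} :
      step p a p' →
      SpecMove step (.att p Q) (.att p' (stepSet step Q a))
  | conjChallenge {p : P} {Q Qs : Set P} :
      Qs ⊆ Q →
      SpecMove step (.att p Q) (.defp p (Q \ Qs) Qs)
  | conjRevival {p : P} {Q Qs : Set P} :
      Qs ≠ ∅ →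
      SpecMove step (.defp p Q Qs) (.att p Qs)
  | conjAnswer {p q : P} {Q Qs : Set P} :
      q ∈ Q →
      SpecMove step (.defp p Q Qs) (.attConj p q)
  | posDecision {p q : P} :
      SpecMove step (.attConj p q) (.att p {q})
  | negDecision {p q : P} :
      p ≠ q →
      SpecMove step (.attConj p q) (.att q {p})

/-- The moves of the clever spectroscopy game `G▲`: like `SpecMove`, with conjunction
challenges restricted to the four subsets
`∅`, `{q ∈ Q | I(q) ⊆ I(p)}`, `{q ∈ Q | I(p) ⊆ I(q)}`, `{q ∈ Q | I(p) = I(q)}`. -/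
inductive CleverMove {P : Type} {Act : Type} (step : P → Act → P → Prop) :
    SpecPos P → SpecPos P → Prop where
  | obs {p p' : P} {Q : Set P} {a : Act} :
      step p a p' →
      CleverMove step (.att p Q) (.att p' (stepSet step Q a))
  | conjChallenge {p : P} {Q Qs : Set P} :
      (Qs = ∅ ∨
       Qs = {q ∈ Q | enabledActs step q ⊆ enabledActs step p} ∨
       Qs = {q ∈ Q | enabledActs step p ⊆ enabledActs step q} ∨
       Qs = {q ∈ Q | enabledActs step p = enabledActs step q}) →
      CleverMove step (.att p Q) (.defp p (Q \ Qs) Qs)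
  | conjRevival {p : P} {Q Qs : Set P} :
      Qs ≠ ∅ →
      CleverMove step (.defp p Q Qs) (.att p Qs)
  | conjAnswer {p q : P} {Q Qs : Set P} :
      q ∈ Q →
      CleverMove step (.defp p Q Qs) (.attConj p q)
  | posDecision {p q : P} :
      CleverMove step (.attConj p q) (.att p {q})
  | negDecision {p q : P} :
      p ≠ q →
      CleverMove step (.attConj p q) (.att q {p})

open Classical in
/-- The weight function of the spectroscopy energy game (well-defined on all moves). -/
noncomputable def specWeight {P : Type} : SpecPos P → SpecPos P → EnergyUpdate 6
  | .att _ _, .att _ _ => uObs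
  | .att _ _, .defp _ _ _ => uConj
  | .defp _ _ _, .att _ _ => uRevival
  | .defp _ _ _, .attConj _ _ => uAnswer
  | .attConj p _, .att p' _ => if p = p' then uPos else uNeg
  | _, _ => uObs

/-- The spectroscopy energy game `G△` of a labeled transition system. -/
noncomputable def specGame {P : Type} {Act : Type} (step : P → Act → P → Prop) :
    EnergyGame 6 where
  Pos := SpecPos P
  defender g := ∃ p Q Qs, g = SpecPos.defp p Q Qs
  move := SpecMove step
  weight := specWeight

/-- The clever spectroscopy energy game `G▲` of a labeled transition system. -/
noncomputable def cleverGame {P : Type} {Act : Type} (step : P → Act → P → Prop) :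
    EnergyGame 6 where
  Pos := SpecPos P
  defender g := ∃ p Q Qs, g = SpecPos.defp p Q Qs
  move := CleverMove step
  weight := specWeight
/-! ### Hennessy–Milner logic -/

/-- Hennessy–Milner logic over actions `Act`: observations `⟨a⟩φ` and finite
conjunctions `⋀ {ψ_i}` whose clauses are positive (`poss`) or negated (`negs`)
formulas. -/
inductive HML (Act : Type) : Type where
  | obs (a : Act) (φ : HML Act)
  | conj (poss : List (HML Act)) (negs : List (HML Act))

/-- HML semantics: `HML.sat step φ p` means `p ⊨ φ`. -/
def HML.sat {P : Type} {Act : Type} (step : P → Act → P → Prop) :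
    HML Act → P → Prop
  | .obs a φ, p => ∃ p', step p a p' ∧ HML.sat step φ p'
  | .conj poss negs, p =>
      (∀ φ ∈ poss, HML.sat step φ p) ∧ (∀ φ ∈ negs, ¬ HML.sat step φ p)

/-- `φ` distinguishes `p` from `q`: `p ⊨ φ` and `q ⊭ φ`. -/
def distinguishes {P : Type} {Act : Type} (step : P → Act → P → Prop)
    (φ : HML Act) (p q : P) : Prop :=
  φ.sat step p ∧ ¬ φ.sat step q

/-- Maximum (supremum) of a list of naturals, `0` for the empty list. -/
def listMax (l : List ℕ) : ℕ := l.foldr max 0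

/-- Supremum of a list of naturals after removing one maximal element
(the "other positive clauses" in the pricing). -/
def supErase (l : List ℕ) : ℕ := listMax (l.erase (listMax l))

mutual
/-- The expressiveness price `expr : HML → ℕ^6` of a formula.
Components (0-indexed): 0 — modal depth; 1 — nesting depth of conjunctions;
2 — modal depth of the deepest positive clauses; 3 — modal depth of the other
positive clauses; 4 — modal depth of negative clauses; 5 — nesting depth of
negations. -/
def HML.expr {Act : Type} : HML Act → Energy 6
  | .obs _ φ => fun k => HML.expr φ k + (if k = 0 then 1 else 0)
  | .conj poss negs =>
      let pe := exprList poss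
      let ne := exprList negs
      -- prices of the clauses (a negated clause adds 1 to component 5)
      let clauseE : List (Energy 6) :=
        pe ++ ne.map (fun v => fun k => v k + (if k = 5 then 1 else 0))
      let base : Energy 6 := fun k =>
        if k = 1 then 1 + listMax (clauseE.map (fun v => v 1))
        else if k = 2 then listMax (pe.map (fun v => v 0))
        else if k = 3 then supErase (pe.map (fun v => v 0))
        else if k = 4 then listMax (ne.map (fun v => v 0))
        else 0
      fun k => max (base k) (listMax (clauseE.map (fun v => v k)))

/-- Prices of a list of formulas. -/
def exprList {Act : Type} : List (HML Act) → List (Energy 6)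
  | [] => []
  | φ :: l => HML.expr φ :: exprList l
end

/-- The expressiveness price as an extended energy. -/
def HML.exprE {Act : Type} (φ : HML Act) : EnergyE 6 := (HML.expr φ).toE

lemma listMax_le_of_mem {a : ℕ} {l : List ℕ} (h : a ∈ l) : a ≤ listMax l := by
  induction l with
  | nil => simp at h
  | cons b t ih =>
    rcases List.mem_cons.mp h with h | h
    · subst h; exact le_max_left _ _
    · exact le_trans (ih h) (le_max_right _ _)

lemma exprList_eq {Act : Type} (l : List (HML Act)) : exprList l = l.map HML.expr := by
  induction l with
  | nil => rfl
  | cons φ t ih => simp [exprList, ih]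

lemma one_le_expr1 {Act : Type} : ∀ φ : HML Act, 1 ≤ φ.expr 1
  | .obs a φ => by
    have := one_le_expr1 φ
    simp only [HML.expr]
    split <;> omega
  | .conj poss negs => by
    simp only [HML.expr]
    exact le_trans (by simp) (le_max_left _ _)

lemma expr_conj_one_ge_pos {Act : Type} {poss negs : List (HML Act)} {ψ : HML Act}
    (h : ψ ∈ poss) : 1 + ψ.expr 1 ≤ (HML.conj poss negs).expr 1 := by
  simp only [HML.expr]
  refine le_trans ?_ (le_max_left _ _)
  rw [if_pos trivial]
  apply Nat.add_le_add_left
  apply listMax_le_of_mem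
  simp only [List.mem_map, List.mem_append, exprList_eq]
  exact ⟨ψ.expr, Or.inl ⟨ψ, h, rfl⟩, rfl⟩

lemma expr_conj_one_ge_neg {Act : Type} {poss negs : List (HML Act)} {ψ : HML Act}
    (h : ψ ∈ negs) : 1 + ψ.expr 1 ≤ (HML.conj poss negs).expr 1 := by
  simp only [HML.expr]
  refine le_trans ?_ (le_max_left _ _)
  rw [if_pos trivial]
  apply Nat.add_le_add_left
  apply listMax_le_of_mem
  simp only [List.mem_map, List.mem_append, exprList_eq, List.map_map]
  exact ⟨fun k => ψ.expr k + if k = 5 then 1 else 0, Or.inr ⟨ψ, h, rfl⟩, by simp⟩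

lemma conj_empty {Act : Type} {poss negs : List (HML Act)}
    (h : (HML.conj poss negs).expr 1 ≤ 1) : poss = [] ∧ negs = [] := by
  constructor
  · cases poss with
    | nil => rfl
    | cons ψ t =>
      exfalso
      have h1 := one_le_expr1 ψ
      have h2 := expr_conj_one_ge_pos (negs := negs) (by simp : ψ ∈ ψ :: t)
      omega
  · cases negs with
    | nil => rfl
    | cons ψ t =>
      exfalso
      have h1 := one_le_expr1 ψ
      have h2 := expr_conj_one_ge_neg (poss := poss) (by simp : ψ ∈ ψ :: t)
      omega

lemma shape_of_price {Act : Type} (φ : HML Act)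
    (h0 : φ.expr 0 ≤ 1) (h1 : φ.expr 1 ≤ 1) :
    φ = .conj [] [] ∨ ∃ a, φ = .obs a (.conj [] []) := by
  match φ with
  | .conj poss negs =>
    obtain ⟨hp, hn⟩ := conj_empty h1
    exact Or.inl (by rw [hp, hn])
  | .obs a ψ =>
    right
    refine ⟨a, ?_⟩
    have h0' : ψ.expr 0 = 0 := by
      simp only [HML.expr, if_pos rfl, if_true] at h0; omega
    have h1' : ψ.expr 1 ≤ 1 := by
      simp only [HML.expr, show ((1 : Fin 6) = 0) = False by simp, if_false] at h1
      omega
    match ψ with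
    | .obs b χ =>
      exfalso
      simp only [HML.expr, if_pos rfl, if_true] at h0'
      omega
    | .conj poss negs =>
      obtain ⟨hp, hn⟩ := conj_empty h1'
      rw [hp, hn]

lemma expr_obs_top {Act : Type} (a : Act) :
    (HML.obs a (HML.conj [] [])).exprE ≤ (![1, 1, 0, 0, 0, 0] : EnergyE 6) := by
  intro k
  fin_cases k <;>
    simp [HML.exprE, Energy.toE, HML.expr, exprList, listMax, supErase]

/-- **Price characterization of enabledness** (instance of Proposition 1):
`I(p) ⊆ I(q)` iff no formula of price `≤ (1,1,0,0,0,0)` distinguishes `p` from `q`. -/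
theorem enabledness_price_characterization {P Act : Type} [Fintype P] [Fintype Act]
    (step : P → Act → P → Prop) (p q : P) :
    enabledActs step p ⊆ enabledActs step q ↔
      ¬ ∃ φ : HML Act,
        φ.exprE ≤ (![1, 1, 0, 0, 0, 0] : EnergyE 6) ∧ distinguishes step φ p q := by
  constructor
  · rintro hsub ⟨φ, hle, hsat, hnsat⟩
    have h0 : φ.expr 0 ≤ 1 := by
      have := hle 0
      simpa [HML.exprE, Energy.toE, Nat.cast_le] using this
    have h1 : φ.expr 1 ≤ 1 := by
      have := hle 1
      simpa [HML.exprE, Energy.toE, Nat.cast_le] using this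
    rcases shape_of_price φ h0 h1 with rfl | ⟨a, rfl⟩
    · exact hnsat (by simp [HML.sat])
    · simp only [HML.sat] at hsat hnsat
      obtain ⟨p', hp', -⟩ := hsat
      obtain ⟨q', hq'⟩ := hsub ⟨p', hp'⟩
      exact hnsat ⟨q', hq', by simp⟩
  · intro hno a ha
    by_contra hq
    obtain ⟨p', hp'⟩ := ha
    refine hno ⟨HML.obs a (HML.conj [] []), expr_obs_top a, ?_, ?_⟩
    · simp only [HML.sat]
      exact ⟨p', hp', by simp⟩
    · simp only [HML.sat]
      rintro ⟨q', hq', -⟩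
      exact hq ⟨q', hq'⟩
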